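/- Let n₊, μ₊, n₋, μ₋, t be an edge configuration with ⟨n₊,n₋⟩ ≠ −1, and let a, b ∈ ℝ³ satisfy ⟨a, n₊⟩ = 0 and ⟨b, n₋⟩ = 0. Then the co-normal continuity condition a = P_{n₋→n₊}(−b) holds if and only if ⟨μ₊, a⟩ = ⟨μ₋, b⟩ and ⟨t, a⟩ = −⟨t, b⟩. -/

import Mathlib

/-!
Both `a` and `P(-b)` lie in `np⊥ = span {μp, t}`, so they agree iff their `μp`- and
`t`-components do. The transport fixes `t`-components since `t ⊥ np, nm`, and on `nm⊥` it sends
the `μm`-component to minus the `μp`-component. The latter reduces to the vector identity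
`(1 + ⟪np, nm⟫) (μp + μm) = ⟪μp, nm⟫ (np + nm)`, checked in the frame `{np, μp, t}` with the
relations `⟪μp, μm⟫ = -⟪np, nm⟫` and `⟪np, μm⟫ = ⟪μp, nm⟫` that follow from `μp = t × np` and
`μm = nm × t`.
-/

open scoped InnerProductSpace

noncomputable section
open Classical

abbrev E3 : Type := EuclideanSpace ℝ (Fin 3)

/-- Cross product on `E3`. -/
def cross3 (a b : E3) : E3 :=
  (EuclideanSpace.equiv (Fin 3) ℝ).symm
    (crossProduct ((EuclideanSpace.equiv (Fin 3) ℝ) a) ((EuclideanSpace.equiv (Fin 3) ℝ) b))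

/-- Geodesic distance on the unit sphere. -/
def sphDist (n₁ n₂ : E3) : ℝ := Real.arccos ⟪n₁, n₂⟫_ℝ

/-- The logarithmic map of the unit sphere. -/
def sphLog (n₁ n₂ : E3) : E3 :=
  if n₂ = n₁ then 0
  else (Real.arccos ⟪n₁, n₂⟫_ℝ / ‖n₂ - ⟪n₁, n₂⟫_ℝ • n₁‖) • (n₂ - ⟪n₁, n₂⟫_ℝ • n₁)

/-- Parallel transport along the shortest geodesic of the unit sphere. -/
def ptrans (n₁ n₂ ξ : E3) : E3 :=
  ξ - (⟪ξ, n₂⟫_ℝ / (1 + ⟪n₂, n₁⟫_ℝ)) • (n₂ + n₁)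

theorem inner_eq_dotProduct (x y : E3) : ⟪x, y⟫_ℝ = x.ofLp ⬝ᵥ y.ofLp := by
  simp [PiLp.inner_apply, dotProduct, mul_comm]

theorem ofLp_cross3 (u v : E3) : (cross3 u v).ofLp = crossProduct u.ofLp v.ofLp := rfl

section CrossProduct

variable {u v : E3}

theorem inner_cross3_cross3 (u v w x : E3) :
    ⟪cross3 u v, cross3 w x⟫_ℝ = ⟪u, w⟫_ℝ * ⟪v, x⟫_ℝ - ⟪u, x⟫_ℝ * ⟪v, w⟫_ℝ := by
  simp only [inner_eq_dotProduct, ofLp_cross3]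
  exact cross_dot_cross _ _ _ _

theorem inner_cross3_self_left (u v : E3) : ⟪cross3 u v, u⟫_ℝ = 0 := by
  rw [real_inner_comm, inner_eq_dotProduct, ofLp_cross3]
  exact dot_self_cross _ _

theorem inner_cross3_self_right (u v : E3) : ⟪cross3 u v, v⟫_ℝ = 0 := by
  rw [real_inner_comm, inner_eq_dotProduct, ofLp_cross3]
  exact dot_cross_self _ _

theorem inner_cross3_cyclic (u v w : E3) : ⟪u, cross3 v w⟫_ℝ = ⟪v, cross3 w u⟫_ℝ := by
  simp only [inner_eq_dotProduct, ofLp_cross3]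
  exact triple_product_permutation _ _ _

theorem cross3_cross3 (u v w : E3) : cross3 (cross3 u v) w = ⟪u, w⟫_ℝ • v - ⟪v, w⟫_ℝ • u :=
  WithLp.ofLp_injective 2 <| by
    simp only [ofLp_cross3, inner_eq_dotProduct, WithLp.ofLp_sub, WithLp.ofLp_smul]
    exact cross_cross_eq_smul_sub_smul _ _ _

theorem cross3_anticomm (u v : E3) : cross3 u v = -cross3 v u :=
  WithLp.ofLp_injective 2 <| by simp only [ofLp_cross3, WithLp.ofLp_neg, cross_anticomm]

theorem cross3_neg_right (u v : E3) : cross3 u (-v) = -cross3 u v :=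
  WithLp.ofLp_injective 2 <| by simp only [ofLp_cross3, WithLp.ofLp_neg, map_neg]

theorem inner_eq_zero_of_norm_cross3 (hu : ‖u‖ = 1) (hv : ‖v‖ = 1) (huv : ‖cross3 u v‖ = 1) :
    ⟪u, v⟫_ℝ = 0 := by
  have h := inner_cross3_cross3 u v u v
  rw [inner_self_eq_one_of_norm_eq_one huv, inner_self_eq_one_of_norm_eq_one hu,
    inner_self_eq_one_of_norm_eq_one hv, real_inner_comm u v] at h
  exact mul_self_eq_zero.mp (by linarith)

theorem cross3_cross3_self (hu : ‖u‖ = 1) (huv : ⟪u, v⟫_ℝ = 0) : cross3 (cross3 u v) u = v := by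
  rw [cross3_cross3, inner_self_eq_one_of_norm_eq_one hu, real_inner_comm, huv]
  simp

theorem orthonormal_cross3 (hu : ‖u‖ = 1) (hv : ‖v‖ = 1) (huv : ‖cross3 u v‖ = 1) :
    Orthonormal ℝ ![u, v, cross3 u v] := by
  have h := inner_eq_zero_of_norm_cross3 hu hv huv
  have hu' : ⟪u, cross3 u v⟫_ℝ = 0 := by rw [real_inner_comm, inner_cross3_self_left]
  have hv' : ⟪v, cross3 u v⟫_ℝ = 0 := by rw [real_inner_comm, inner_cross3_self_right]
  rw [orthonormal_iff_ite]
  intro i j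
  fin_cases i <;> fin_cases j <;>
    simp [hu, hv, huv, h, hu', hv', real_inner_comm u v,
      inner_cross3_self_left, inner_cross3_self_right]

end CrossProduct

theorem Orthonormal.ext_inner {𝕜 ι V : Type*} [RCLike 𝕜] [Fintype ι] [Nonempty ι]
    [NormedAddCommGroup V] [InnerProductSpace 𝕜 V] {e : ι → V} (he : Orthonormal 𝕜 e)
    (hcard : Fintype.card ι = Module.finrank 𝕜 V) {x y : V} (h : ∀ i, ⟪e i, x⟫_𝕜 = ⟪e i, y⟫_𝕜) :
    x = y :=
  InnerProductSpace.ext_inner_left_basis (basisOfOrthonormalOfCardEqFinrank he hcard)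
    (by simpa only [coe_basisOfOrthonormalOfCardEqFinrank] using h)

theorem inner_ptrans_eq_zero {n₁ n₂ : E3} (hn₂ : ‖n₂‖ = 1) (hne : ⟪n₂, n₁⟫_ℝ ≠ -1) (ξ : E3) :
    ⟪ptrans n₁ n₂ ξ, n₂⟫_ℝ = 0 := by
  have h : 1 + ⟪n₂, n₁⟫_ℝ ≠ 0 := fun h ↦ hne (by linarith)
  rw [ptrans, inner_sub_left, real_inner_smul_left, inner_add_left,
    inner_self_eq_one_of_norm_eq_one hn₂, real_inner_comm n₂ n₁, div_mul_cancel₀ _ h, sub_self]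

structure IsEdgeConfig (np μp nm μm t : E3) : Prop where
  norm_np : ‖np‖ = 1
  norm_μp : ‖μp‖ = 1
  norm_nm : ‖nm‖ = 1
  norm_μm : ‖μm‖ = 1
  norm_t : ‖t‖ = 1
  cross_plus : cross3 np μp = t
  cross_minus : cross3 nm μm = -t

namespace IsEdgeConfig

variable {np μp nm μm t : E3}

theorem inner_np_μp (h : IsEdgeConfig np μp nm μm t) : ⟪np, μp⟫_ℝ = 0 :=
  inner_eq_zero_of_norm_cross3 h.norm_np h.norm_μp (h.cross_plus ▸ h.norm_t)

theorem inner_nm_μm (h : IsEdgeConfig np μp nm μm t) : ⟪nm, μm⟫_ℝ = 0 :=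
  inner_eq_zero_of_norm_cross3 h.norm_nm h.norm_μm (by rw [h.cross_minus, norm_neg, h.norm_t])

theorem inner_t_np (h : IsEdgeConfig np μp nm μm t) : ⟪t, np⟫_ℝ = 0 :=
  h.cross_plus ▸ inner_cross3_self_left _ _

theorem inner_t_μp (h : IsEdgeConfig np μp nm μm t) : ⟪t, μp⟫_ℝ = 0 :=
  h.cross_plus ▸ inner_cross3_self_right _ _

theorem inner_t_nm (h : IsEdgeConfig np μp nm μm t) : ⟪t, nm⟫_ℝ = 0 := by
  rw [← neg_neg t, inner_neg_left, ← h.cross_minus, inner_cross3_self_left, neg_zero]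

theorem inner_t_μm (h : IsEdgeConfig np μp nm μm t) : ⟪t, μm⟫_ℝ = 0 := by
  rw [← neg_neg t, inner_neg_left, ← h.cross_minus, inner_cross3_self_right, neg_zero]

theorem cross3_t_np (h : IsEdgeConfig np μp nm μm t) : cross3 t np = μp :=
  h.cross_plus ▸ cross3_cross3_self h.norm_np h.inner_np_μp

theorem cross3_nm_t (h : IsEdgeConfig np μp nm μm t) : cross3 nm t = μm := by
  have hμm := cross3_cross3_self h.norm_nm h.inner_nm_μm
  rwa [h.cross_minus, cross3_anticomm, cross3_neg_right, neg_neg] at hμm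

theorem inner_μp_μm (h : IsEdgeConfig np μp nm μm t) : ⟪μp, μm⟫_ℝ = -⟪np, nm⟫_ℝ := by
  rw [← h.cross3_t_np, ← h.cross3_nm_t, inner_cross3_cross3, h.inner_t_nm,
    inner_self_eq_one_of_norm_eq_one h.norm_t]
  ring

theorem inner_np_μm (h : IsEdgeConfig np μp nm μm t) : ⟪np, μm⟫_ℝ = ⟪μp, nm⟫_ℝ := by
  rw [← h.cross3_t_np, ← h.cross3_nm_t, inner_cross3_cyclic, real_inner_comm]

theorem inner_np_nm_sq_add_inner_μp_nm_sq (h : IsEdgeConfig np μp nm μm t) :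
    ⟪np, nm⟫_ℝ ^ 2 + ⟪μp, nm⟫_ℝ ^ 2 = 1 := by
  have hBC := inner_cross3_cross3 np μp nm μm
  rw [h.cross_plus, h.cross_minus, inner_neg_right, inner_self_eq_one_of_norm_eq_one h.norm_t,
    h.inner_μp_μm, h.inner_np_μm] at hBC
  linarith

theorem orthonormal_plus (h : IsEdgeConfig np μp nm μm t) : Orthonormal ℝ ![np, μp, t] :=
  h.cross_plus ▸ orthonormal_cross3 h.norm_np h.norm_μp (h.cross_plus ▸ h.norm_t)

theorem ext_inner_plus (h : IsEdgeConfig np μp nm μm t) {x y : E3} (hn : ⟪np, x⟫_ℝ = ⟪np, y⟫_ℝ)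
    (hμ : ⟪μp, x⟫_ℝ = ⟪μp, y⟫_ℝ) (ht : ⟪t, x⟫_ℝ = ⟪t, y⟫_ℝ) : x = y :=
  h.orthonormal_plus.ext_inner (by simp) fun i ↦ by fin_cases i <;> assumption

/- Since `μp = t × np` and `μm = -(t × nm)`, `μp + μm = t × (np - nm)` is the quarter turn about `t`
of `np - nm`, which is orthogonal to `np + nm` in the plane orthogonal to `t`. -/
theorem smul_μp_add_μm (h : IsEdgeConfig np μp nm μm t) :
    (1 + ⟪np, nm⟫_ℝ) • (μp + μm) = ⟪μp, nm⟫_ℝ • (np + nm) := by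
  have hsq := h.inner_np_nm_sq_add_inner_μp_nm_sq
  apply h.ext_inner_plus <;>
    simp only [inner_smul_right, inner_add_right, inner_self_eq_one_of_norm_eq_one h.norm_np,
      inner_self_eq_one_of_norm_eq_one h.norm_μp, h.inner_np_μp, h.inner_np_μm, h.inner_μp_μm,
      h.inner_t_np, h.inner_t_μp, h.inner_t_nm, h.inner_t_μm, real_inner_comm np μp]
  · ring
  · linear_combination -hsq
  · ring

theorem eq_iff_of_inner_np (h : IsEdgeConfig np μp nm μm t) {x y : E3} (hx : ⟪x, np⟫_ℝ = 0)
    (hy : ⟪y, np⟫_ℝ = 0) : x = y ↔ ⟪μp, x⟫_ℝ = ⟪μp, y⟫_ℝ ∧ ⟪t, x⟫_ℝ = ⟪t, y⟫_ℝ := by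
  refine ⟨by rintro rfl; exact ⟨rfl, rfl⟩, fun ⟨hμ, ht⟩ ↦ h.ext_inner_plus ?_ hμ ht⟩
  rw [real_inner_comm, hx, real_inner_comm, hy]

theorem inner_t_ptrans (h : IsEdgeConfig np μp nm μm t) (ξ : E3) :
    ⟪t, ptrans nm np ξ⟫_ℝ = ⟪t, ξ⟫_ℝ := by
  rw [ptrans, inner_sub_right, inner_smul_right, inner_add_right, h.inner_t_np, h.inner_t_nm,
    add_zero, mul_zero, sub_zero]

theorem inner_μp_ptrans (h : IsEdgeConfig np μp nm μm t) (hne : ⟪np, nm⟫_ℝ ≠ -1) {ξ : E3}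
    (hξ : ⟪ξ, nm⟫_ℝ = 0) : ⟪μp, ptrans nm np ξ⟫_ℝ = -⟪μm, ξ⟫_ℝ := by
  have hc : 1 + ⟪np, nm⟫_ℝ ≠ 0 := fun hc ↦ hne (by linarith)
  have hbis : (1 + ⟪np, nm⟫_ℝ) * (⟪μp, ξ⟫_ℝ + ⟪μm, ξ⟫_ℝ) = ⟪μp, nm⟫_ℝ * ⟪np, ξ⟫_ℝ := by
    have := congrArg (⟪·, ξ⟫_ℝ) h.smul_μp_add_μm
    rwa [real_inner_smul_left, real_inner_smul_left, inner_add_left, inner_add_left,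
      real_inner_comm ξ nm, hξ, add_zero] at this
  rw [ptrans, inner_sub_right, inner_smul_right, inner_add_right, real_inner_comm np μp,
    h.inner_np_μp, zero_add, real_inner_comm np ξ]
  field_simp
  linear_combination hbis

end IsEdgeConfig

theorem co_normal_continuity_characterization (np μp nm μm t : E3)
    (hnp : ‖np‖ = 1) (hμp : ‖μp‖ = 1) (hnm : ‖nm‖ = 1) (hμm : ‖μm‖ = 1) (ht : ‖t‖ = 1)
    (hcp : cross3 np μp = t) (hcm : cross3 nm μm = -t)
    (hne : ⟪np, nm⟫_ℝ ≠ -1)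
    (a b : E3) (ha : ⟪a, np⟫_ℝ = 0) (hb : ⟪b, nm⟫_ℝ = 0) :
    a = ptrans nm np (-b) ↔ (⟪μp, a⟫_ℝ = ⟪μm, b⟫_ℝ ∧ ⟪t, a⟫_ℝ = -⟪t, b⟫_ℝ) := by
  have hE : IsEdgeConfig np μp nm μm t := ⟨hnp, hμp, hnm, hμm, ht, hcp, hcm⟩
  have hb' : ⟪-b, nm⟫_ℝ = 0 := by rw [inner_neg_left, hb, neg_zero]
  rw [hE.eq_iff_of_inner_np ha (inner_ptrans_eq_zero hnp hne _), hE.inner_μp_ptrans hne hb',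
    hE.inner_t_ptrans, inner_neg_right, inner_neg_right, neg_neg]
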